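/- Let (W,S) be a Coxeter system and suppose a subset K of W has a unique minimal element u in the Bruhat order. Then for any s ∈ S, the subset K ∪ sK also has a unique minimal element in the Bruhat order, namely u ∧ su. Analogously, if K admits a unique maximal element v in the Bruhat order, then v ∨ sv is the unique maximal element of K ∪ sK. -/

import Mathlib

variable {B W : Type*} [Group W] {M : CoxeterMatrix B}

/-- The (strong) Bruhat order on the Coxeter group `W`: `u ≤ v` if and only if some
reduced word for `v` admits a sublist whose product is `u`. -/
def BruhatLE (cs : CoxeterSystem M W) (u v : W) : Prop :=
  ∃ ω : List B, cs.IsReduced ω ∧ cs.wordProd ω = v ∧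
    ∃ ω' : List B, ω'.Sublist ω ∧ cs.wordProd ω' = u

/-- The strict Bruhat order. -/
def BruhatLT (cs : CoxeterSystem M W) (u v : W) : Prop :=
  BruhatLE cs u v ∧ u ≠ v

/-- `m` is the unique minimal element of `K` in the Bruhat order, i.e. `m ∈ K` and
`m` is Bruhat-below every element of `K`. -/
def IsBrMin (cs : CoxeterSystem M W) (K : Set W) (m : W) : Prop :=
  m ∈ K ∧ ∀ x ∈ K, BruhatLE cs m x

/-- `m` is the unique maximal element of `K` in the Bruhat order, i.e. `m ∈ K` and
`m` is Bruhat-above every element of `K`. -/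
def IsBrMax (cs : CoxeterSystem M W) (K : Set W) (m : W) : Prop :=
  m ∈ K ∧ ∀ x ∈ K, BruhatLE cs x m

/-- A standard parabolic subgroup: a subgroup generated by a subset of the simple
reflections. -/
def IsStdParabolic (cs : CoxeterSystem M W) (P : Subgroup W) : Prop :=
  ∃ X : Set B, P = Subgroup.closure (cs.simple '' X)

/-- The left coset `u•W₁ = {u * b : b ∈ W₁}`. -/
def lCoset (W₁ : Subgroup W) (u : W) : Set W := {x | ∃ b ∈ W₁, x = u * b}

/-- The double coset `W₁ u W₂ = {a * u * b : a ∈ W₁, b ∈ W₂}`. -/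
def dblCoset (W₁ W₂ : Subgroup W) (u : W) : Set W :=
  {x | ∃ a ∈ W₁, ∃ b ∈ W₂, x = a * u * b}

/-!
We work with the Bruhat order described by chains `x → x * t` of length-increasing
multiplications by reflections. Its lifting property (if `x → y`, `s y < y` and `x < s x`, then
`s x ≤ y` and `x ≤ s y`) makes `x ↦ x ∧ s x` and `x ↦ x ∨ s x` monotone; as
`x ∧ s x ≤ x, s x ≤ x ∨ s x`, the minimum `u` (maximum `v`) of `K` is sent to a minimum (maximum)
of `K ∪ sK`. The chain description agrees with the subword one by the strong exchange condition,
which comes from Tits' sign representation: the parity of the number of occurrences of a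
reflection in the right inversion sequence of a word depends only on the product of the word.
-/

namespace CoxeterSystem

open scoped Classical

variable (cs : CoxeterSystem M W)

local prefix:100 "s " => cs.simple
local prefix:100 "π " => cs.wordProd
local prefix:100 "ℓ " => cs.length
local prefix:100 "ris " => cs.rightInvSeq
local prefix:100 "lis " => cs.leftInvSeq

/-- Tits' action of `s i` on pairs (reflection, sign), extended to all of `W × ℤˣ`. -/
noncomputable def signedConjSimple (i : B) : Function.End (W × ℤˣ) :=
  fun p => (s i * p.1 * s i, if p.1 = s i then -p.2 else p.2)

theorem prod_map_signedConjSimple_apply (ω : List B) (p : W × ℤˣ) :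
    ((ω.map cs.signedConjSimple).prod : Function.End (W × ℤˣ)) p =
      (π ω * p.1 * (π ω)⁻¹, (-1) ^ (ris ω).count p.1 * p.2) := by
  induction ω with
  | nil => show p = _; simp
  | cons i ω ih =>
    change cs.signedConjSimple i (((ω.map cs.signedConjSimple).prod : Function.End _) p) = _
    rw [ih, signedConjSimple, wordProd_cons, rightInvSeq.eq_2, List.count_cons]
    have hconj : π ω * p.1 * (π ω)⁻¹ = s i ↔ p.1 = (π ω)⁻¹ * s i * π ω :=
      ⟨fun h => by rw [← h]; group, fun h => by rw [h]; group⟩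
    congr 1
    · simp only [mul_inv_rev, inv_simple, mul_assoc]
    · by_cases h : π ω * p.1 * (π ω)⁻¹ = s i
      · simp [h, (hconj.mp h).symm, pow_succ]
      · have h' : (π ω)⁻¹ * s i * π ω ≠ p.1 := fun e => h (hconj.mpr e.symm)
        simp [h, h']

theorem alternatingWord_two_mul_add_two (i j : B) (p : ℕ) :
    alternatingWord i j (2 * p + 2) = alternatingWord i j (2 * p) ++ [i, j] := by
  simp [alternatingWord_succ]

theorem prod_map_alternatingWord_two_mul {G : Type*} [Monoid G] (f : B → G) (i j : B) (p : ℕ) :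
    ((alternatingWord i j (2 * p)).map f).prod = (f i * f j) ^ p := by
  induction p with
  | zero => simp [alternatingWord]
  | succ p ih =>
    rw [mul_add_one, alternatingWord_two_mul_add_two, List.map_append, List.prod_append, ih]
    simp [pow_succ]

theorem reverse_alternatingWord_two_mul (i j : B) (p : ℕ) :
    (alternatingWord i j (2 * p)).reverse = alternatingWord j i (2 * p) := by
  induction p with
  | zero => rfl
  | succ p ih =>
    have hcons : alternatingWord j i (2 * p + 2) = j :: i :: alternatingWord j i (2 * p) := by
      simp [alternatingWord_succ']
    rw [mul_add_one, alternatingWord_two_mul_add_two, hcons, List.reverse_append, ih]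
    rfl

theorem rightInvSeq_alternatingWord_two_mul (i j : B) (p : ℕ) :
    ris (alternatingWord i j (2 * p)) =
      ((List.range (2 * p)).map fun k => s j * (s i * s j) ^ k).reverse := by
  rw [← reverse_alternatingWord_two_mul, rightInvSeq_reverse]
  congr 1
  refine List.ext_getElem (by simp) fun k hk _ => ?_
  rw [getElem_leftInvSeq_alternatingWord cs j i p k (by simpa using hk),
    prod_alternatingWord_eq_mul_pow]
  simp [Nat.not_even_bit1, show (2 * k + 1) / 2 = k by omega]

theorem even_count_rightInvSeq_alternatingWord (i j : B) (t : W) :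
    Even ((ris (alternatingWord i j (2 * M i j))).count t) := by
  rw [rightInvSeq_alternatingWord_two_mul, List.count_reverse, two_mul, List.range_add,
    List.map_append, List.count_append, List.map_map]
  have hperiodic : ((fun k => s j * (s i * s j) ^ k) ∘ (M i j + ·)) =
      fun k => s j * (s i * s j) ^ k := by
    funext k
    simp [pow_add, simple_mul_simple_pow]
  rw [hperiodic]
  exact ⟨_, rfl⟩

theorem isLiftable_signedConjSimple : M.IsLiftable cs.signedConjSimple := by
  intro i j
  rw [← prod_map_alternatingWord_two_mul]
  funext p
  show _ = p
  rw [prod_map_signedConjSimple_apply,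
    (cs.even_count_rightInvSeq_alternatingWord i j p.1).neg_one_pow, prod_alternatingWord_eq_mul_pow]
  simp [simple_mul_simple_pow]

noncomputable def signedConj : W →* Function.End (W × ℤˣ) :=
  cs.lift ⟨cs.signedConjSimple, cs.isLiftable_signedConjSimple⟩

theorem signedConj_wordProd (ω : List B) :
    cs.signedConj (π ω) = (ω.map cs.signedConjSimple).prod := by
  simp [signedConj, wordProd, map_list_prod, Function.comp_def]

theorem even_count_rightInvSeq_iff_of_wordProd_eq {ω ω' : List B} (h : π ω = π ω') (t : W) :
    Even ((ris ω).count t) ↔ Even ((ris ω').count t) := by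
  have hsign := congrArg (fun g : Function.End (W × ℤˣ) => (g (t, 1)).2)
    (congrArg cs.signedConj h)
  simp only [signedConj_wordProd, prod_map_signedConjSimple_apply, mul_one] at hsign
  rw [← neg_one_pow_eq_one_iff_even (R := ℤˣ) (by decide), hsign,
    neg_one_pow_eq_one_iff_even (by decide)]

theorem count_map_conj (g t : W) (l : List W) :
    (l.map (MulAut.conj g)).count t = l.count (g⁻¹ * t * g) := by
  conv_lhs => rw [show t = MulAut.conj g (g⁻¹ * t * g) by simp [mul_assoc]]
  exact List.count_map_of_injective _ _ (MulAut.conj g).injective _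

theorem rightInvSeq_append (ω ω' : List B) :
    ris (ω ++ ω') = (ris ω).map (MulAut.conj (π ω')⁻¹) ++ ris ω' := by
  induction ω with
  | nil => simp
  | cons i ω ih => simp [rightInvSeq, ih, wordProd_append, mul_assoc]

theorem leftInvSeq_eq_map_conj_rightInvSeq (ω : List B) :
    lis ω = (ris ω).map (MulAut.conj (π ω)) := by
  induction ω with
  | nil => rfl
  | cons i ω ih => simp [leftInvSeq, rightInvSeq, ih, wordProd_cons, mul_assoc]

theorem count_rightInvSeq_palindrome (γ : List B) (k : B) :
    (ris (γ ++ k :: γ.reverse)).count (π γ * s k * (π γ)⁻¹) = 2 * (ris γ).count (s k) + 1 := by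
  rw [rightInvSeq_append, rightInvSeq, rightInvSeq_reverse, leftInvSeq_eq_map_conj_rightInvSeq,
    List.count_append, List.count_cons, List.count_reverse, count_map_conj, count_map_conj]
  simp [wordProd_cons, mul_assoc]
  omega

theorem mem_rightInvSeq_of_isRightInversion {ω : List B} {t : W}
    (ht : cs.IsRightInversion (π ω) t) : t ∈ ris ω := by
  obtain ⟨⟨w, k, rfl⟩, hlt⟩ := ht
  obtain ⟨γ, rfl⟩ := cs.wordProd_surjective w
  obtain ⟨τ, hτ, hτω⟩ := cs.exists_isReduced (π ω * (π γ * s k * (π γ)⁻¹))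
  set t := π γ * s k * (π γ)⁻¹
  set β := γ ++ k :: γ.reverse
  have hβ : π β = t := by simp [β, t, wordProd_append, wordProd_cons, mul_assoc]
  have htt : t * t = 1 := (cs.isReflection_simple k).conj _ |>.mul_self
  have hprod : π (τ ++ β) = π ω := by
    rw [wordProd_append, hβ, ← hτω, mul_assoc, htt, mul_one]
  have hτt : t ∉ ris τ := fun hmem => by
    have := (cs.isRightInversion_of_mem_rightInvSeq hτ hmem).2
    rw [← hτω, mul_assoc, htt, mul_one] at this
    omega
  have hodd : ¬ Even ((ris (τ ++ β)).count t) := by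
    rw [rightInvSeq_append, List.count_append, count_map_conj, hβ, inv_inv,
      show t * t * t⁻¹ = t by group, List.count_eq_zero.mpr hτt, count_rightInvSeq_palindrome]
    simp
  by_contra hmem
  rw [cs.even_count_rightInvSeq_iff_of_wordProd_eq hprod, List.count_eq_zero.mpr hmem] at hodd
  exact hodd ⟨0, rfl⟩

theorem exists_wordProd_mul_eq_wordProd_eraseIdx {ω : List B} {t : W}
    (ht : cs.IsRightInversion (π ω) t) : ∃ j < ω.length, π ω * t = π (ω.eraseIdx j) := by
  obtain ⟨j, hj, rfl⟩ := List.getElem_of_mem (cs.mem_rightInvSeq_of_isRightInversion ht)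
  refine ⟨j, by simpa using hj, ?_⟩
  rw [← List.getD_eq_getElem _ 1, wordProd_mul_getD_rightInvSeq]

def BruhatStep (x y : W) : Prop := ∃ t, cs.IsReflection t ∧ y = x * t ∧ ℓ x < ℓ y

def BruhatChain : W → W → Prop := Relation.ReflTransGen cs.BruhatStep

variable {cs}

theorem BruhatStep.length_lt {x y : W} (h : cs.BruhatStep x y) : ℓ x < ℓ y :=
  h.choose_spec.2.2

theorem BruhatStep.isRightInversion {x y : W} (h : cs.BruhatStep x y) :
    ∃ t, cs.IsRightInversion y t ∧ x = y * t := by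
  obtain ⟨t, ht, rfl, hlt⟩ := h
  refine ⟨t, ⟨ht, ?_⟩, ?_⟩ <;> rw [mul_assoc, ht.mul_self, mul_one]
  exact hlt

theorem BruhatStep.simple_mul {x y : W} (h : cs.BruhatStep x y) {i : B}
    (hlt : ℓ (s i * x) < ℓ (s i * y)) : cs.BruhatStep (s i * x) (s i * y) := by
  obtain ⟨t, ht, rfl, -⟩ := h
  exact ⟨t, ht, (mul_assoc _ _ _).symm, hlt⟩

variable (cs)

theorem bruhatStep_self_simple_mul {x : W} {i : B} (h : ℓ x < ℓ (s i * x)) :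
    cs.BruhatStep x (s i * x) :=
  ⟨x⁻¹ * s i * x, ⟨x⁻¹, i, by group⟩, by group, h⟩

theorem bruhatStep_simple_mul_self {x : W} {i : B} (h : ℓ (s i * x) < ℓ x) :
    cs.BruhatStep (s i * x) x := by
  simpa using cs.bruhatStep_self_simple_mul (x := s i * x) (i := i) (by simpa using h)

variable {cs}

theorem BruhatStep.lifting {x y : W} (h : cs.BruhatStep x y) {i : B}
    (hy : ℓ (s i * y) < ℓ y) (hx : ℓ x < ℓ (s i * x)) :
    cs.BruhatChain (s i * x) y ∧ cs.BruhatChain x (s i * y) := by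
  -- Exchange in a reduced word `i :: τ` of `y`: deleting the first letter gives `x = s y`;
  -- deleting a letter of `τ` exhibits `s x` below `s y`.
  obtain ⟨t, ht, rfl⟩ := h.isRightInversion
  obtain ⟨τ, hτ, hτy⟩ := cs.exists_isReduced (s i * y)
  have hy_word : y = π (i :: τ) := by rw [wordProd_cons, ← hτy, simple_mul_simple_cancel_left]
  rw [hy_word] at ht
  obtain ⟨j, hj, hyt⟩ := cs.exists_wordProd_mul_eq_wordProd_eraseIdx ht
  rw [← hy_word] at hyt
  rcases j with _ | j
  · have hx_eq : y * t = s i * y := by rw [hyt, List.eraseIdx_cons_zero, ← hτy]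
    rw [hx_eq, simple_mul_simple_cancel_left]
    exact ⟨.refl, .refl⟩
  · rw [List.eraseIdx_cons_succ, wordProd_cons] at hyt
    have hj : j < τ.length := by simpa using hj
    have hlen : ℓ (s i * (y * t)) < ℓ (s i * y) := by
      rw [hyt, simple_mul_simple_cancel_left, hτy, hτ]
      refine (cs.length_wordProd_le _).trans_lt ?_
      rw [List.length_eraseIdx_of_lt hj]
      omega
    exact ⟨.head (h.simple_mul hlen) (.single (cs.bruhatStep_simple_mul_self hy)),
      .head (cs.bruhatStep_self_simple_mul hx) (.single (h.simple_mul hlen))⟩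

variable (cs)

noncomputable def simpleMulMin (i : B) (x : W) : W := if ℓ (s i * x) < ℓ x then s i * x else x

noncomputable def simpleMulMax (i : B) (x : W) : W := if ℓ x < ℓ (s i * x) then s i * x else x

theorem simpleMulMin_eq_or (i : B) (x : W) :
    cs.simpleMulMin i x = x ∨ cs.simpleMulMin i x = s i * x := by
  unfold simpleMulMin; split_ifs <;> simp

theorem simpleMulMax_eq_or (i : B) (x : W) :
    cs.simpleMulMax i x = x ∨ cs.simpleMulMax i x = s i * x := by
  unfold simpleMulMax; split_ifs <;> simp

theorem bruhatChain_simpleMulMin_self (i : B) (x : W) : cs.BruhatChain (cs.simpleMulMin i x) x := by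
  unfold simpleMulMin
  split_ifs with h
  exacts [.single (cs.bruhatStep_simple_mul_self h), .refl]

theorem bruhatChain_simpleMulMin_simple_mul (i : B) (x : W) :
    cs.BruhatChain (cs.simpleMulMin i x) (s i * x) := by
  unfold simpleMulMin
  split_ifs with h
  exacts [.refl, .single (cs.bruhatStep_self_simple_mul
    ((lt_or_gt_of_ne (cs.length_simple_mul_ne x i)).resolve_left h))]

theorem bruhatChain_self_simpleMulMax (i : B) (x : W) : cs.BruhatChain x (cs.simpleMulMax i x) := by
  unfold simpleMulMax
  split_ifs with h
  exacts [.single (cs.bruhatStep_self_simple_mul h), .refl]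

theorem bruhatChain_simple_mul_simpleMulMax (i : B) (x : W) :
    cs.BruhatChain (s i * x) (cs.simpleMulMax i x) := by
  unfold simpleMulMax
  split_ifs with h
  exacts [.refl, .single (cs.bruhatStep_simple_mul_self
    ((lt_or_gt_of_ne (cs.length_simple_mul_ne x i)).resolve_right h))]

variable {cs}

theorem BruhatStep.simpleMulMin {x y : W} (h : cs.BruhatStep x y) (i : B) :
    cs.BruhatChain (cs.simpleMulMin i x) (cs.simpleMulMin i y) := by
  have hxy := h.length_lt
  have hx_len := cs.length_simple_mul x i
  have hy_len := cs.length_simple_mul y i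
  unfold CoxeterSystem.simpleMulMin
  split_ifs with hx hy hy
  · exact .single (h.simple_mul (by omega))
  · exact .head (cs.bruhatStep_simple_mul_self hx) (.single h)
  · exact (h.lifting hy (by omega)).2
  · exact .single h

theorem BruhatStep.simpleMulMax {x y : W} (h : cs.BruhatStep x y) (i : B) :
    cs.BruhatChain (cs.simpleMulMax i x) (cs.simpleMulMax i y) := by
  have hxy := h.length_lt
  have hx_len := cs.length_simple_mul x i
  have hy_len := cs.length_simple_mul y i
  unfold CoxeterSystem.simpleMulMax
  split_ifs with hx hy hy
  · exact .single (h.simple_mul (by omega))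
  · exact (h.lifting (by omega) hx).1
  · exact .head h (.single (cs.bruhatStep_self_simple_mul hy))
  · exact .single h

theorem BruhatChain.simpleMulMin {x y : W} (h : cs.BruhatChain x y) (i : B) :
    cs.BruhatChain (cs.simpleMulMin i x) (cs.simpleMulMin i y) :=
  Relation.ReflTransGen.lift' (cs.simpleMulMin i)
    (fun _ _ (hstep : cs.BruhatStep _ _) => hstep.simpleMulMin i) _ _ h

theorem BruhatChain.simpleMulMax {x y : W} (h : cs.BruhatChain x y) (i : B) :
    cs.BruhatChain (cs.simpleMulMax i x) (cs.simpleMulMax i y) :=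
  Relation.ReflTransGen.lift' (cs.simpleMulMax i)
    (fun _ _ (hstep : cs.BruhatStep _ _) => hstep.simpleMulMax i) _ _ h

theorem IsReduced.of_cons {a : B} {ω : List B} (h : cs.IsReduced (a :: ω)) : cs.IsReduced ω := by
  simpa using h.drop 1

theorem IsReduced.length_lt_simple_mul {a : B} {ω : List B} (h : cs.IsReduced (a :: ω)) :
    ℓ (π ω) < ℓ (s a * π ω) := by
  rw [h.of_cons, ← wordProd_cons, h, List.length_cons]
  omega

theorem bruhatChain_wordProd_of_sublist {ω ω' : List B} (hω : cs.IsReduced ω)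
    (h : ω'.Sublist ω) : cs.BruhatChain (π ω') (π ω) := by
  induction h with
  | slnil => exact .refl
  | cons a _ ih =>
    exact (ih hω.of_cons).tail (cs.bruhatStep_self_simple_mul hω.length_lt_simple_mul)
  | cons_cons a _ ih =>
    have hmax : cs.simpleMulMax a _ = _ := if_pos hω.length_lt_simple_mul
    rw [wordProd_cons, wordProd_cons, ← hmax]
    exact (cs.bruhatChain_simple_mul_simpleMulMax a _).trans ((ih hω.of_cons).simpleMulMax a)

theorem BruhatChain.exists_sublist {u w : W} (h : cs.BruhatChain u w) {ω : List B}
    (hω : π ω = w) : ∃ ω', ω'.Sublist ω ∧ π ω' = u := by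
  induction h generalizing ω with
  | refl => exact ⟨ω, .refl ω, hω⟩
  | tail _ hstep ih =>
    obtain ⟨t, ht, rfl⟩ := hstep.isRightInversion
    subst hω
    obtain ⟨j, -, hj⟩ := cs.exists_wordProd_mul_eq_wordProd_eraseIdx ht
    obtain ⟨ω', hsub, hω'⟩ := ih hj.symm
    exact ⟨ω', hsub.trans (List.eraseIdx_sublist ω j), hω'⟩

theorem bruhatLE_iff_bruhatChain {u v : W} : BruhatLE cs u v ↔ cs.BruhatChain u v := by
  constructor
  · rintro ⟨ω, hω, rfl, ω', hsub, rfl⟩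
    exact bruhatChain_wordProd_of_sublist hω hsub
  · intro h
    obtain ⟨ω, hω, rfl⟩ := cs.exists_isReduced v
    obtain ⟨ω', hsub, rfl⟩ := h.exists_sublist rfl
    exact ⟨ω, hω, rfl, ω', hsub, rfl⟩

end CoxeterSystem

/-- If a subset `K` of a Coxeter group has a unique minimal element `u` under the Bruhat
order, then for any simple reflection `s`, the set `K ∪ sK` has a unique minimal element,
namely `u ∧ su` (the Bruhat-smaller of `u` and `su`).  Analogously, if `K` has a unique
maximal element `v`, then `v ∨ sv` is the unique maximal element of `K ∪ sK`. -/
theorem stmt_0 (cs : CoxeterSystem M W) (K : Set W) (i : B) :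
    (∀ u : W, IsBrMin cs K u →
      ∃ m, (m = u ∨ m = cs.simple i * u) ∧
        IsBrMin cs (K ∪ (fun x => cs.simple i * x) '' K) m) ∧
    (∀ v : W, IsBrMax cs K v →
      ∃ m, (m = v ∨ m = cs.simple i * v) ∧
        IsBrMax cs (K ∪ (fun x => cs.simple i * x) '' K) m) := by
  simp only [IsBrMin, IsBrMax, cs.bruhatLE_iff_bruhatChain]
  refine ⟨fun u ⟨hu, hmin⟩ => ⟨cs.simpleMulMin i u, cs.simpleMulMin_eq_or i u, ?_, ?_⟩,
    fun v ⟨hv, hmax⟩ => ⟨cs.simpleMulMax i v, cs.simpleMulMax_eq_or i v, ?_, ?_⟩⟩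
  · rcases cs.simpleMulMin_eq_or i u with h | h <;> rw [h]
    exacts [.inl hu, .inr ⟨u, hu, rfl⟩]
  · rintro _ (hx | ⟨x, hx, rfl⟩)
    · exact ((hmin _ hx).simpleMulMin i).trans (cs.bruhatChain_simpleMulMin_self i _)
    · exact ((hmin x hx).simpleMulMin i).trans (cs.bruhatChain_simpleMulMin_simple_mul i x)
  · rcases cs.simpleMulMax_eq_or i v with h | h <;> rw [h]
    exacts [.inl hv, .inr ⟨v, hv, rfl⟩]
  · rintro _ (hx | ⟨x, hx, rfl⟩)
    · exact (cs.bruhatChain_self_simpleMulMax i _).trans ((hmax _ hx).simpleMulMax i)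
    · exact (cs.bruhatChain_simple_mul_simpleMulMax i x).trans ((hmax x hx).simpleMulMax i)
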